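/- If g and g' in SL(2,ℂ) satisfy tr(g) = tr(g') and tr(g) ≠ 2 and tr(g) ≠ −2, then there exists h in SL(2,ℂ) with g' = h g h⁻¹. In other words, the fiber of the trace map over any value x ≠ ±2 is a single conjugacy class of SL(2,ℂ). -/

import Mathlib

open Matrix
open scoped MatrixGroups

/-!
A matrix `A ∈ SL(2, ℂ)` that is not scalar has a cyclic vector `v`, and in the basis `v, A v`
Cayley–Hamilton (`A² = (tr A) A - 1`) shows that `A` acts by the companion matrix
`!![0, -1; 1, tr A]`. Rescaling the change of basis by a square root of the inverse of its
determinant puts it in `SL(2, ℂ)`. When `tr A ≠ ±2`, `A` cannot be scalar, since a scalar of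
determinant `1` is `±1`; so all such matrices of a given trace are conjugate to the same
companion matrix.
-/

namespace Matrix

section CommRing

variable {R : Type*} [CommRing R]

def krylovMatrix (A : Matrix (Fin 2) (Fin 2) R) (v : Fin 2 → R) : Matrix (Fin 2) (Fin 2) R :=
  !![v 0, (A *ᵥ v) 0; v 1, (A *ᵥ v) 1]

theorem mul_krylovMatrix (A : Matrix (Fin 2) (Fin 2) R) (v : Fin 2 → R) :
    A * krylovMatrix A v = krylovMatrix A v * !![0, -A.det; 1, A.trace] := by
  ext i j
  fin_cases i <;> fin_cases j <;>
    simp [krylovMatrix, mul_apply, mulVec, dotProduct, Fin.sum_univ_two, det_fin_two,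
      trace_fin_two] <;> ring

theorem exists_eq_scalar_of_det_krylovMatrix_eq_zero (A : Matrix (Fin 2) (Fin 2) R)
    (h : ∀ v, (krylovMatrix A v).det = 0) : ∃ a, A = scalar (Fin 2) a := by
  have hc : A 1 0 = 0 := by
    simpa [krylovMatrix, det_fin_two_of, mulVec, dotProduct, Fin.sum_univ_two] using h ![1, 0]
  have hb : A 0 1 = 0 := by
    simpa [krylovMatrix, det_fin_two_of, mulVec, dotProduct, Fin.sum_univ_two] using h ![0, 1]
  have had : A 1 1 = A 0 0 := by
    simpa [krylovMatrix, det_fin_two_of, mulVec, dotProduct, Fin.sum_univ_two, hb, hc,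
      sub_eq_zero] using h ![1, 1]
  refine ⟨A 0 0, ?_⟩
  rw [A.eta_fin_two, hb, hc, had]
  ext i j
  fin_cases i <;> fin_cases j <;> rfl

end CommRing

namespace SpecialLinearGroup

variable {R : Type*} [CommRing R]

/-- The companion matrix of `X² - t X + 1`. -/
def companion (t : R) : SL(2, R) :=
  ⟨!![0, -1; 1, t], by simp [det_fin_two]⟩

theorem ne_scalar_of_trace_ne_two [IsDomain R] (g : SL(2, R))
    (h2 : (g : Matrix (Fin 2) (Fin 2) R).trace ≠ 2)
    (hm2 : (g : Matrix (Fin 2) (Fin 2) R).trace ≠ -2) (a : R) :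
    (g : Matrix (Fin 2) (Fin 2) R) ≠ scalar (Fin 2) a := by
  intro hg
  have ha : a * a = 1 := by rw [← g.det_coe, hg, det_fin_two]; simp
  rcases mul_self_eq_one_iff.mp ha with rfl | rfl
  · exact h2 (by simp [hg])
  · exact hm2 (by simp [hg])

theorem exists_mul_eq_mul_companion {K : Type*} [Field K] [IsAlgClosed K] (g : SL(2, K))
    (hg : ∀ a, (g : Matrix (Fin 2) (Fin 2) K) ≠ scalar (Fin 2) a) :
    ∃ h : SL(2, K), g * h = h * companion (g : Matrix (Fin 2) (Fin 2) K).trace := by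
  obtain ⟨v, hv⟩ : ∃ v, (krylovMatrix (g : Matrix (Fin 2) (Fin 2) K) v).det ≠ 0 := by
    by_contra! h
    obtain ⟨a, ha⟩ := exists_eq_scalar_of_det_krylovMatrix_eq_zero _ h
    exact hg a ha
  set P := krylovMatrix (g : Matrix (Fin 2) (Fin 2) K) v
  obtain ⟨s, hs⟩ := IsAlgClosed.exists_pow_nat_eq P.det⁻¹ two_pos
  refine ⟨⟨s • P, by rw [det_smul, Fintype.card_fin, hs, inv_mul_cancel₀ hv]⟩,
    Subtype.ext ?_⟩
  change (g : Matrix (Fin 2) (Fin 2) K) * (s • P) = (s • P) * !![0, -1; 1, _]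
  rw [Matrix.mul_smul, Matrix.smul_mul, mul_krylovMatrix, g.det_coe]

end SpecialLinearGroup

end Matrix

open Matrix.SpecialLinearGroup in
/-- Two elements of `SL(2,ℂ)` with the same trace `≠ ±2` are conjugate in `SL(2,ℂ)`:
the fiber of the trace map over any value `x ≠ ±2` is a single conjugacy class. -/
theorem conjugate_of_trace_eq_of_trace_ne
    (g g' : SL(2, ℂ))
    (htr : Matrix.trace ((g : Matrix (Fin 2) (Fin 2) ℂ)) =
      Matrix.trace ((g' : Matrix (Fin 2) (Fin 2) ℂ)))
    (h2 : Matrix.trace ((g : Matrix (Fin 2) (Fin 2) ℂ)) ≠ 2)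
    (hm2 : Matrix.trace ((g : Matrix (Fin 2) (Fin 2) ℂ)) ≠ -2) :
    ∃ h : SL(2, ℂ), g' = h * g * h⁻¹ := by
  obtain ⟨k, hk⟩ := exists_mul_eq_mul_companion g (ne_scalar_of_trace_ne_two g h2 hm2)
  obtain ⟨k', hk'⟩ := exists_mul_eq_mul_companion g'
    (ne_scalar_of_trace_ne_two g' (htr ▸ h2) (htr ▸ hm2))
  rw [← htr] at hk'
  refine ⟨k' * k⁻¹, ?_⟩
  calc g' = k' * companion (g : Matrix (Fin 2) (Fin 2) ℂ).trace * k'⁻¹ := by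
        rw [← hk']; group
    _ = k' * k⁻¹ * g * (k' * k⁻¹)⁻¹ := by rw [← inv_mul_eq_iff_eq_mul.mpr hk]; group
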